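/- For every real x, φ(x)² ≤ (2/π) · Φ(x) · (1 − Φ(x)), with equality if and only if x = 0; i.e., the probit weight function φ(x)²/(Φ(x)(1 − Φ(x))) attains its maximal value 2/π exactly at x = 0. -/

import Mathlib

open Real MeasureTheory

/-- The standard normal density `φ`. -/
noncomputable def stdNormalPDF (x : ℝ) : ℝ :=
  (Real.sqrt (2 * Real.pi))⁻¹ * Real.exp (-(x ^ 2) / 2)

/-- The standard normal cumulative distribution function `Φ`. -/
noncomputable def stdNormalCDF (x : ℝ) : ℝ :=
  ∫ u in Set.Iic x, stdNormalPDF u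

/-!
Write `h = (2/π) Φ (1 - Φ) - φ²`. Since `Φ' = φ` and `φ' = -x φ`, one gets `h' = 2 φ k` with
`k = (1 - 2Φ)/π + x φ` and `k' = φ (1 - 2/π - x²)`. So `k` rises from `k 0 = 0` on
`[0, √(1 - 2/π)]` and falls afterwards: on `(0, ∞)` it is positive up to some point and negative
beyond it. Hence for `t > 0` either `h` increases strictly on `[0, t]`, so `h t > h 0 = 0`, or `h`
decreases strictly on `[t, ∞)`, so `h t > lim h = 0` (as `Φ → 1`, `φ → 0`). Finally `h` is even.
-/

open Set Filter Topology ProbabilityTheory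

lemma stdNormalPDF_eq_gaussianPDFReal : stdNormalPDF = gaussianPDFReal 0 1 := by
  ext x
  simp [stdNormalPDF, gaussianPDFReal]

lemma stdNormalPDF_pos (x : ℝ) : 0 < stdNormalPDF x := by
  rw [stdNormalPDF_eq_gaussianPDFReal]
  exact gaussianPDFReal_pos _ _ _ one_ne_zero

lemma stdNormalPDF_neg (x : ℝ) : stdNormalPDF (-x) = stdNormalPDF x := by
  simp [stdNormalPDF]

lemma integrable_stdNormalPDF : Integrable stdNormalPDF := by
  rw [stdNormalPDF_eq_gaussianPDFReal]
  exact integrable_gaussianPDFReal _ _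

lemma integral_stdNormalPDF : ∫ x, stdNormalPDF x = 1 := by
  rw [stdNormalPDF_eq_gaussianPDFReal]
  exact integral_gaussianPDFReal_eq_one _ one_ne_zero

lemma hasDerivAt_stdNormalPDF (x : ℝ) : HasDerivAt stdNormalPDF (-x * stdNormalPDF x) x := by
  have h : HasDerivAt (fun u : ℝ => -(u ^ 2) / 2) (-x) x :=
    ((hasDerivAt_pow 2 x).fun_neg.div_const 2).congr_deriv (by norm_num; ring)
  exact (h.exp.const_mul _).congr_deriv (by simp only [stdNormalPDF]; ring)

lemma tendsto_stdNormalPDF_atTop : Tendsto stdNormalPDF atTop (𝓝 0) := by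
  have h : Tendsto (fun x : ℝ => -(x ^ 2) / 2) atTop atBot :=
    (tendsto_neg_atTop_atBot.comp (tendsto_pow_atTop two_ne_zero)).atBot_div_const two_pos
  have := (tendsto_exp_atBot.comp h).const_mul (√(2 * π))⁻¹
  rwa [mul_zero] at this

lemma stdNormalCDF_eq_cdf : stdNormalCDF = cdf (gaussianReal 0 1) := by
  ext x
  rw [cdf_eq_real, measureReal_def, gaussianReal_apply_eq_integral _ one_ne_zero,
    ENNReal.toReal_ofReal (setIntegral_nonneg measurableSet_Iic fun u _ =>
      gaussianPDFReal_nonneg _ _ _), stdNormalCDF, stdNormalPDF_eq_gaussianPDFReal]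

lemma tendsto_stdNormalCDF_atTop : Tendsto stdNormalCDF atTop (𝓝 1) := by
  rw [stdNormalCDF_eq_cdf]
  exact tendsto_cdf_atTop _

lemma one_sub_stdNormalCDF (x : ℝ) : 1 - stdNormalCDF x = ∫ u in Ioi x, stdNormalPDF u := by
  rw [← integral_stdNormalPDF, ← intervalIntegral.integral_Iic_add_Ioi
    integrable_stdNormalPDF.integrableOn integrable_stdNormalPDF.integrableOn, stdNormalCDF,
    add_sub_cancel_left]

lemma stdNormalCDF_neg (x : ℝ) : stdNormalCDF (-x) = 1 - stdNormalCDF x := by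
  rw [one_sub_stdNormalCDF, stdNormalCDF, ← integral_comp_neg_Ioi]
  simp only [stdNormalPDF_neg]

lemma stdNormalCDF_zero : stdNormalCDF 0 = 1 / 2 := by
  have h := stdNormalCDF_neg 0
  rw [neg_zero] at h
  linarith

lemma hasDerivAt_stdNormalCDF (x : ℝ) : HasDerivAt stdNormalCDF (stdNormalPDF x) x := by
  have hcont : Continuous stdNormalPDF := by unfold stdNormalPDF; fun_prop
  have hFTC : HasDerivAt (fun u => ∫ t in (0 : ℝ)..u, stdNormalPDF t) (stdNormalPDF x) x :=
    intervalIntegral.integral_hasDerivAt_right integrable_stdNormalPDF.intervalIntegrable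
      (hcont.stronglyMeasurableAtFilter _ _) hcont.continuousAt
  have hΦ : stdNormalCDF = fun u => stdNormalCDF 0 + ∫ t in (0 : ℝ)..u, stdNormalPDF t := by
    funext u
    rw [← intervalIntegral.integral_Iic_sub_Iic integrable_stdNormalPDF.integrableOn
      integrable_stdNormalPDF.integrableOn, ← stdNormalCDF, ← stdNormalCDF, add_sub_cancel]
  rw [hΦ]
  exact hFTC.const_add _

section Monotonicity

variable {D : Set ℝ} {f f' : ℝ → ℝ}

lemma strictMonoOn_of_hasDerivAt_pos (hD : Convex ℝ D) (hf : ∀ x, HasDerivAt f (f' x) x)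
    (hf' : ∀ x ∈ interior D, 0 < f' x) : StrictMonoOn f D :=
  strictMonoOn_of_deriv_pos hD (fun x _ => (hf x).continuousAt.continuousWithinAt)
    fun x hx => (hf x).deriv ▸ hf' x hx

lemma strictAntiOn_of_hasDerivAt_neg (hD : Convex ℝ D) (hf : ∀ x, HasDerivAt f (f' x) x)
    (hf' : ∀ x ∈ interior D, f' x < 0) : StrictAntiOn f D :=
  strictAntiOn_of_deriv_neg hD (fun x _ => (hf x).continuousAt.continuousWithinAt)
    fun x hx => (hf x).deriv ▸ hf' x hx

lemma lt_apply_of_strictMonoOn_of_strictAntiOn {k : ℝ → ℝ} {a c u t : ℝ}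
    (hmono : StrictMonoOn k (Icc a c)) (hanti : StrictAntiOn k (Ici c))
    (hu : a < u) (hut : u < t) (hkt : k a ≤ k t) : k a < k u := by
  rcases le_or_gt u c with huc | hcu
  · exact hmono (left_mem_Icc.2 (hu.le.trans huc)) ⟨hu.le, huc⟩ hu
  · exact hkt.trans_lt (hanti hcu.le (hcu.trans hut).le hut)

end Monotonicity

noncomputable def probitGap (x : ℝ) : ℝ :=
  2 / π * stdNormalCDF x * (1 - stdNormalCDF x) - stdNormalPDF x ^ 2

noncomputable def probitGapDerivFactor (x : ℝ) : ℝ :=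
  (1 - 2 * stdNormalCDF x) / π + x * stdNormalPDF x

lemma hasDerivAt_probitGap (x : ℝ) :
    HasDerivAt probitGap (2 * stdNormalPDF x * probitGapDerivFactor x) x := by
  have hΦ := hasDerivAt_stdNormalCDF x
  have h := ((hΦ.const_mul (2 / π)).mul (hΦ.const_sub 1)).sub ((hasDerivAt_stdNormalPDF x).pow 2)
  exact h.congr_deriv (by simp only [probitGapDerivFactor]; ring)

lemma hasDerivAt_probitGapDerivFactor (x : ℝ) :
    HasDerivAt probitGapDerivFactor (stdNormalPDF x * (1 - 2 / π - x ^ 2)) x := by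
  have h := ((((hasDerivAt_stdNormalCDF x).const_mul 2).const_sub 1).div_const π).add
    ((hasDerivAt_id x).mul (hasDerivAt_stdNormalPDF x))
  exact h.congr_deriv (by simp only [id]; ring)

lemma probitGap_neg (x : ℝ) : probitGap (-x) = probitGap x := by
  simp only [probitGap, stdNormalCDF_neg, stdNormalPDF_neg]
  ring

lemma probitGap_zero : probitGap 0 = 0 := by
  have hφ : stdNormalPDF 0 ^ 2 = (2 * π)⁻¹ := by
    rw [stdNormalPDF, mul_pow, inv_pow, Real.sq_sqrt (by positivity)]
    simp
  rw [probitGap, hφ, stdNormalCDF_zero]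
  field_simp
  ring

lemma probitGapDerivFactor_zero : probitGapDerivFactor 0 = 0 := by
  simp [probitGapDerivFactor, stdNormalCDF_zero]

lemma tendsto_probitGap_atTop : Tendsto probitGap atTop (𝓝 0) := by
  have h := ((tendsto_stdNormalCDF_atTop.const_mul (2 / π)).mul
    (tendsto_stdNormalCDF_atTop.const_sub 1)).sub (tendsto_stdNormalPDF_atTop.pow 2)
  rwa [show (0 : ℝ) = 2 / π * 1 * (1 - 1) - 0 ^ 2 by ring]

lemma strictMonoOn_probitGapDerivFactor :
    StrictMonoOn probitGapDerivFactor (Icc 0 √(1 - 2 / π)) :=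
  strictMonoOn_of_hasDerivAt_pos (convex_Icc _ _) hasDerivAt_probitGapDerivFactor fun u hu => by
    rw [interior_Icc] at hu
    have hu2 : u ^ 2 < 1 - 2 / π := (Real.lt_sqrt hu.1.le).1 hu.2
    exact mul_pos (stdNormalPDF_pos u) (by linarith)

lemma strictAntiOn_probitGapDerivFactor :
    StrictAntiOn probitGapDerivFactor (Ici √(1 - 2 / π)) :=
  strictAntiOn_of_hasDerivAt_neg (convex_Ici _) hasDerivAt_probitGapDerivFactor fun u hu => by
    rw [interior_Ici] at hu
    have hu2 : 1 - 2 / π < u ^ 2 :=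
      (Real.sqrt_lt' ((Real.sqrt_nonneg _).trans_lt hu)).1 hu
    exact mul_neg_of_pos_of_neg (stdNormalPDF_pos u) (by linarith)

lemma probitGapDerivFactor_pos_of_lt {u t : ℝ} (hu : 0 < u) (hut : u < t)
    (ht : 0 ≤ probitGapDerivFactor t) : 0 < probitGapDerivFactor u := by
  rw [← probitGapDerivFactor_zero] at ht ⊢
  exact lt_apply_of_strictMonoOn_of_strictAntiOn strictMonoOn_probitGapDerivFactor
    strictAntiOn_probitGapDerivFactor hu hut ht

lemma probitGap_pos {t : ℝ} (ht : 0 < t) : 0 < probitGap t := by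
  rcases le_or_gt 0 (probitGapDerivFactor t) with hkt | hkt
  · have hmono : StrictMonoOn probitGap (Icc 0 t) :=
      strictMonoOn_of_hasDerivAt_pos (convex_Icc _ _) hasDerivAt_probitGap fun u hu => by
        rw [interior_Icc] at hu
        have := stdNormalPDF_pos u
        have := probitGapDerivFactor_pos_of_lt hu.1 hu.2 hkt
        positivity
    simpa [probitGap_zero] using hmono (left_mem_Icc.2 ht.le) (right_mem_Icc.2 ht.le) ht
  · have hanti : StrictAntiOn probitGap (Ici t) :=
      strictAntiOn_of_hasDerivAt_neg (convex_Ici _) hasDerivAt_probitGap fun u hu => by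
        rw [interior_Ici] at hu
        have hku : probitGapDerivFactor u < 0 := by
          by_contra! hku
          exact lt_asymm hkt (probitGapDerivFactor_pos_of_lt ht hu hku)
        exact mul_neg_of_pos_of_neg (by linarith [stdNormalPDF_pos u]) hku
    have hfar : 0 ≤ probitGap (t + 1) :=
      le_of_tendsto tendsto_probitGap_atTop <| (eventually_ge_atTop (t + 1)).mono fun y hy =>
        hanti.antitoneOn (mem_Ici.2 (by linarith)) (mem_Ici.2 (by linarith)) hy
    exact hfar.trans_lt (hanti self_mem_Ici (mem_Ici.2 (by linarith)) (by linarith))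

lemma probitGap_pos_of_ne_zero {x : ℝ} (hx : x ≠ 0) : 0 < probitGap x := by
  rcases hx.lt_or_gt with hneg | hpos
  · simpa [probitGap_neg] using probitGap_pos (neg_pos.2 hneg)
  · exact probitGap_pos hpos

/-- For every real `x`, `φ(x)² ≤ (2/π) Φ(x) (1 − Φ(x))`, with equality iff `x = 0`:
the probit weight function attains its maximal value `2/π` exactly at `x = 0`. -/
theorem probit_weight_bound (x : ℝ) :
    stdNormalPDF x ^ 2 ≤ (2 / Real.pi) * stdNormalCDF x * (1 - stdNormalCDF x) ∧
      (stdNormalPDF x ^ 2 = (2 / Real.pi) * stdNormalCDF x * (1 - stdNormalCDF x) ↔ x = 0) := by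
  rcases eq_or_ne x 0 with rfl | hx
  · have h := probitGap_zero
    rw [probitGap, sub_eq_zero] at h
    exact ⟨h.ge, iff_of_true h.symm rfl⟩
  · have h := probitGap_pos_of_ne_zero hx
    rw [probitGap, sub_pos] at h
    exact ⟨h.le, iff_of_false h.ne hx⟩
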